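/- arXiv:1909.03880 — 2 statements merged into one kernel-verified Lean document; each statement's English description precedes it below -/
import Mathlib

section
/- The configuration T consisting of full c×c blocks for cells of P and punctured c×c blocks (missing one interior cell) for empty cells of the bounding box of P is 4-connected, for any polyomino P and c ≥ 2. -/
/-- 4-adjacency on the integer grid. -/
def Adj4 (p q : ℤ × ℤ) : Prop := |p.1 - q.1| + |p.2 - q.2| = 1

/-- A set of cells is 4-connected (and nonempty). -/
def ConnectedIn (S : Set (ℤ × ℤ)) : Prop :=
  S.Nonempty ∧ ∀ p ∈ S, ∀ q ∈ S,
    Relation.ReflTransGen (fun a b : ℤ × ℤ => a ∈ S ∧ b ∈ S ∧ Adj4 a b) p q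

/-- Scaling a set of cells by factor `c` (floor division). -/
def scaleSet (c : ℤ) (P : Set (ℤ × ℤ)) : Set (ℤ × ℤ) :=
  {p : ℤ × ℤ | (Int.fdiv p.1 c, Int.fdiv p.2 c) ∈ P}

/-- Every nonempty column is an integer interval. -/
def ColIntervals (P : Set (ℤ × ℤ)) : Prop :=
  ∀ x y₁ y₂ y : ℤ, (x, y₁) ∈ P → (x, y₂) ∈ P → y₁ ≤ y → y ≤ y₂ → (x, y) ∈ P

/-- The set of nonempty columns is an interval of x-values. -/
def ColsInterval (P : Set (ℤ × ℤ)) : Prop :=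
  ∀ x₁ x₂ x : ℤ, (∃ y, (x₁, y) ∈ P) → (∃ y, (x₂, y) ∈ P) → x₁ ≤ x → x ≤ x₂ →
    ∃ y, (x, y) ∈ P

/-- x-monotone (column-convex) polyomino. -/
def XMonotone (P : Set (ℤ × ℤ)) : Prop := ColIntervals P ∧ ColsInterval P

/-- Boundary cells: cells of `P` with a 4-neighbor outside `P`. -/
def Bdry (P : Set (ℤ × ℤ)) : Set (ℤ × ℤ) := {p | p ∈ P ∧ ∃ q, Adj4 p q ∧ q ∉ P}

/-- The c×c block of cell (a,b). -/
def cblock (c a b : ℤ) : Set (ℤ × ℤ) :=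
  {p | ∃ i j : ℤ, 0 ≤ i ∧ i < c ∧ 0 ≤ j ∧ j < c ∧ p = (c * a + i, c * b + j)}

/-- Bounding-box rectangle. -/
def boxR (xmin xmax ymin ymax : ℤ) : Set (ℤ × ℤ) :=
  {p | xmin ≤ p.1 ∧ p.1 ≤ xmax ∧ ymin ≤ p.2 ∧ p.2 ≤ ymax}

/-- Scaled configuration with punctured blocks (puncture at (ca+1, cb+1)) for empty cells. -/
def configT (c : ℤ) (P R : Set (ℤ × ℤ)) : Set (ℤ × ℤ) :=
  {p | ∃ a b : ℤ, (a, b) ∈ P ∧ p ∈ cblock c a b} ∪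
  {p | ∃ a b : ℤ, (a, b) ∈ R ∧ (a, b) ∉ P ∧ p ∈ cblock c a b ∧
        p ≠ (c * a + 1, c * b + 1)}


/-!
The puncture `(c a + 1, c b + 1)` never lies on the bottom row or the left column of its block, so
every block of `T` keeps this "L-shaped frame". Inside a block, every cell of `T` reaches the
block's corner `(c a, c b)` by a horizontal and a vertical segment, and the corners of two adjacent
cells of the bounding box are joined along the frame edge they share. Hence any path of cells in
the (connected) bounding box lifts to a path of corners in `T`.
-/

open Relation

def Linked (S : Set (ℤ × ℤ)) : ℤ × ℤ → ℤ × ℤ → Prop :=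
  ReflTransGen fun a b => a ∈ S ∧ b ∈ S ∧ Adj4 a b

theorem adj4_comm {p q : ℤ × ℤ} : Adj4 p q ↔ Adj4 q p := by
  unfold Adj4
  rw [abs_sub_comm p.1, abs_sub_comm p.2]

theorem adj4_iff {x y x' y' : ℤ} :
    Adj4 (x, y) (x', y') ↔ (x' = x + 1 ∨ x = x' + 1) ∧ y' = y ∨
      x' = x ∧ (y' = y + 1 ∨ y = y' + 1) := by
  unfold Adj4
  rcases abs_cases (x - x') with h₁ | h₁ <;> rcases abs_cases (y - y') with h₂ | h₂ <;>
    simp only at h₁ h₂ ⊢ <;> omega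

theorem adj4_add_one_fst (x y : ℤ) : Adj4 (x, y) (x + 1, y) :=
  adj4_iff.2 (Or.inl ⟨Or.inl rfl, rfl⟩)

theorem adj4_add_one_snd (x y : ℤ) : Adj4 (x, y) (x, y + 1) :=
  adj4_iff.2 (Or.inr ⟨rfl, Or.inl rfl⟩)

namespace Linked

variable {S : Set (ℤ × ℤ)} {p q r : ℤ × ℤ}

theorem refl (p : ℤ × ℤ) : Linked S p p := ReflTransGen.refl

theorem trans (hpq : Linked S p q) (hqr : Linked S q r) : Linked S p r :=
  ReflTransGen.trans hpq hqr

theorem of_adj4 (hp : p ∈ S) (hq : q ∈ S) (h : Adj4 p q) : Linked S p q :=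
  ReflTransGen.single ⟨hp, hq, h⟩

theorem symm (h : Linked S p q) : Linked S q p := by
  induction h with
  | refl => exact refl _
  | tail _ hstep ih => exact (of_adj4 hstep.2.1 hstep.1 (adj4_comm.1 hstep.2.2)).trans ih

theorem horizontal {x x' y : ℤ} (h : ∀ t ∈ Set.uIcc x x', (t, y) ∈ S) :
    Linked S (x, y) (x', y) := by
  wlog hle : x ≤ x' generalizing x x'
  · exact (this (by rwa [Set.uIcc_comm]) (le_of_not_ge hle)).symm
  rw [Set.uIcc_of_le hle] at h
  induction x', hle using Int.leInduction with
  | base => exact refl _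
  | succ n hn ih =>
    refine (ih fun t ht => h t ⟨ht.1, Int.le_add_one ht.2⟩).trans
      (of_adj4 (h n ⟨hn, by omega⟩) (h (n + 1) ⟨by omega, le_rfl⟩) (adj4_add_one_fst n y))

theorem vertical {x y y' : ℤ} (h : ∀ t ∈ Set.uIcc y y', (x, t) ∈ S) :
    Linked S (x, y) (x, y') := by
  wlog hle : y ≤ y' generalizing y y'
  · exact (this (by rwa [Set.uIcc_comm]) (le_of_not_ge hle)).symm
  rw [Set.uIcc_of_le hle] at h
  induction y', hle using Int.leInduction with
  | base => exact refl _
  | succ n hn ih =>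
    refine (ih fun t ht => h t ⟨ht.1, Int.le_add_one ht.2⟩).trans
      (of_adj4 (h n ⟨hn, by omega⟩) (h (n + 1) ⟨by omega, le_rfl⟩) (adj4_add_one_snd x n))

end Linked

theorem connectedIn_boxR {xmin xmax ymin ymax : ℤ} (hx : xmin ≤ xmax) (hy : ymin ≤ ymax) :
    ConnectedIn (boxR xmin xmax ymin ymax) := by
  refine ⟨⟨(xmin, ymin), le_rfl, hx, le_rfl, hy⟩, ?_⟩
  rintro ⟨x, y⟩ ⟨hx₁, hx₂, hy₁, hy₂⟩ ⟨x', y'⟩ ⟨hx₁', hx₂', hy₁', hy₂'⟩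
  have row : Linked (boxR xmin xmax ymin ymax) (x, y) (x', y) :=
    Linked.horizontal fun t ht => by
      rw [Set.mem_uIcc] at ht
      exact ⟨by omega, by omega, hy₁, hy₂⟩
  have column : Linked (boxR xmin xmax ymin ymax) (x', y) (x', y') :=
    Linked.vertical fun t ht => by
      rw [Set.mem_uIcc] at ht
      exact ⟨hx₁', hx₂', by omega, by omega⟩
  exact row.trans column

section configT

variable {c : ℤ} {P R : Set (ℤ × ℤ)}

theorem mem_configT {a b x y : ℤ} (hab : (a, b) ∈ R)
    (hx : c * a ≤ x ∧ x < c * a + c) (hy : c * b ≤ y ∧ y < c * b + c)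
    (hpunct : (a, b) ∈ P ∨ ¬(x = c * a + 1 ∧ y = c * b + 1)) :
    (x, y) ∈ configT c P R := by
  have hblock : (x, y) ∈ cblock c a b :=
    ⟨x - c * a, y - c * b, by omega, by omega, by omega, by omega, by simp⟩
  by_cases hP : (a, b) ∈ P
  · exact Or.inl ⟨a, b, hP, hblock⟩
  · refine Or.inr ⟨a, b, hab, hP, hblock, fun h => ?_⟩
    simp only [Prod.mk.injEq] at h
    exact hpunct.resolve_left hP h

theorem linked_corner_of_mem_block {a b i j : ℤ} (hab : (a, b) ∈ R)
    (hi : 0 ≤ i ∧ i < c) (hj : 0 ≤ j ∧ j < c) (hpunct : (a, b) ∈ P ∨ ¬(i = 1 ∧ j = 1)) :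
    Linked (configT c P R) (c * a, c * b) (c * a + i, c * b + j) := by
  -- leave the corner along the column `0` if `i ≤ 1`, along the row `0` otherwise:
  -- neither of them meets the puncture
  by_cases hi₁ : i ≤ 1
  · have column : Linked (configT c P R) (c * a, c * b) (c * a, c * b + j) :=
      Linked.vertical fun t ht => by
        rw [Set.mem_uIcc] at ht
        exact mem_configT hab ⟨by omega, by omega⟩ ⟨by omega, by omega⟩ (Or.inr (by omega))
    have row : Linked (configT c P R) (c * a, c * b + j) (c * a + i, c * b + j) :=
      Linked.horizontal fun t ht => by
        rw [Set.mem_uIcc] at ht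
        exact mem_configT hab ⟨by omega, by omega⟩ ⟨by omega, by omega⟩
          (hpunct.imp_right (by omega))
    exact column.trans row
  · have row : Linked (configT c P R) (c * a, c * b) (c * a + i, c * b) :=
      Linked.horizontal fun t ht => by
        rw [Set.mem_uIcc] at ht
        exact mem_configT hab ⟨by omega, by omega⟩ ⟨by omega, by omega⟩ (Or.inr (by omega))
    have column : Linked (configT c P R) (c * a + i, c * b) (c * a + i, c * b + j) :=
      Linked.vertical fun t ht => by
        rw [Set.mem_uIcc] at ht
        exact mem_configT hab ⟨by omega, by omega⟩ ⟨by omega, by omega⟩ (Or.inr (by omega))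
    exact row.trans column

theorem exists_linked_corner (hPR : P ⊆ R) {p : ℤ × ℤ} (hp : p ∈ configT c P R) :
    ∃ a b : ℤ, (a, b) ∈ R ∧ Linked (configT c P R) (c * a, c * b) p := by
  rcases hp with ⟨a, b, hP, i, j, hi, hi', hj, hj', rfl⟩ |
    ⟨a, b, hab, -, ⟨i, j, hi, hi', hj, hj', rfl⟩, hpunct⟩
  · exact ⟨a, b, hPR hP, linked_corner_of_mem_block (hPR hP) ⟨hi, hi'⟩ ⟨hj, hj'⟩ (Or.inl hP)⟩
  · refine ⟨a, b, hab, linked_corner_of_mem_block hab ⟨hi, hi'⟩ ⟨hj, hj'⟩ (Or.inr ?_)⟩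
    rintro ⟨rfl, rfl⟩
    exact hpunct rfl

theorem linked_corner_add_one_fst (hc : 0 < c) {a b : ℤ} (hab : (a, b) ∈ R)
    (hab' : (a + 1, b) ∈ R) :
    Linked (configT c P R) (c * a, c * b) (c * (a + 1), c * b) := by
  rw [mul_add_one]
  refine Linked.horizontal fun t ht => ?_
  rw [Set.mem_uIcc] at ht
  rcases lt_or_eq_of_le (show t ≤ c * a + c by omega) with ht' | rfl
  · exact mem_configT hab ⟨by omega, ht'⟩ ⟨le_rfl, by omega⟩ (Or.inr (by omega))
  · exact mem_configT hab' ⟨by rw [mul_add_one], by rw [mul_add_one]; omega⟩ ⟨le_rfl, by omega⟩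
      (Or.inr (by rw [mul_add_one]; omega))

theorem linked_corner_add_one_snd (hc : 0 < c) {a b : ℤ} (hab : (a, b) ∈ R)
    (hab' : (a, b + 1) ∈ R) :
    Linked (configT c P R) (c * a, c * b) (c * a, c * (b + 1)) := by
  rw [mul_add_one]
  refine Linked.vertical fun t ht => ?_
  rw [Set.mem_uIcc] at ht
  rcases lt_or_eq_of_le (show t ≤ c * b + c by omega) with ht' | rfl
  · exact mem_configT hab ⟨le_rfl, by omega⟩ ⟨by omega, ht'⟩ (Or.inr (by omega))
  · exact mem_configT hab' ⟨le_rfl, by omega⟩ ⟨by rw [mul_add_one], by rw [mul_add_one]; omega⟩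
      (Or.inr (by rw [mul_add_one]; omega))

theorem linked_corner_of_adj4 (hc : 0 < c) {u v : ℤ × ℤ} (hu : u ∈ R) (hv : v ∈ R)
    (huv : Adj4 u v) : Linked (configT c P R) (c * u.1, c * u.2) (c * v.1, c * v.2) := by
  obtain ⟨a, b⟩ := u
  obtain ⟨a', b'⟩ := v
  rcases adj4_iff.1 huv with ⟨rfl | rfl, rfl⟩ | ⟨rfl, rfl | rfl⟩
  · exact linked_corner_add_one_fst hc hu hv
  · exact (linked_corner_add_one_fst hc hv hu).symm
  · exact linked_corner_add_one_snd hc hu hv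
  · exact (linked_corner_add_one_snd hc hv hu).symm

theorem Linked.corners (hc : 0 < c) {u v : ℤ × ℤ} (h : Linked R u v) :
    Linked (configT c P R) (c * u.1, c * u.2) (c * v.1, c * v.2) := by
  induction h with
  | refl => exact Linked.refl _
  | tail _ hstep ih => exact ih.trans (linked_corner_of_adj4 hc hstep.1 hstep.2.1 hstep.2.2)

theorem connectedIn_configT (hc : 0 < c) (hPR : P ⊆ R) (hR : ConnectedIn R) :
    ConnectedIn (configT c P R) := by
  obtain ⟨⟨a, b⟩, hab⟩ := hR.1
  refine ⟨⟨(c * a, c * b), ?_⟩, fun p hp q hq => ?_⟩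
  · exact mem_configT hab ⟨le_rfl, by omega⟩ ⟨le_rfl, by omega⟩ (Or.inr (by omega))
  obtain ⟨a, b, hab, hp⟩ := exists_linked_corner hPR hp
  obtain ⟨a', b', hab', hq⟩ := exists_linked_corner hPR hq
  exact hp.symm.trans ((Linked.corners (P := P) hc (hR.2 _ hab _ hab')).trans hq)

end configT

theorem punctured_configuration_connected_general
    (P : Set (ℤ × ℤ)) (hne : P.Nonempty)
    (xmin xmax ymin ymax : ℤ)
    (hx1 : IsLeast (Prod.fst '' P) xmin) (hx2 : IsGreatest (Prod.fst '' P) xmax)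
    (hy1 : IsLeast (Prod.snd '' P) ymin) (hy2 : IsGreatest (Prod.snd '' P) ymax)
    (c : ℤ) (hc : 2 ≤ c) :
    ConnectedIn (configT c P (boxR xmin xmax ymin ymax)) := by
  have hPR : P ⊆ boxR xmin xmax ymin ymax := fun p hp =>
    ⟨hx1.2 ⟨p, hp, rfl⟩, hx2.2 ⟨p, hp, rfl⟩, hy1.2 ⟨p, hp, rfl⟩, hy2.2 ⟨p, hp, rfl⟩⟩
  obtain ⟨p, hp⟩ := hne
  obtain ⟨hx₁, hx₂, hy₁, hy₂⟩ := hPR hp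
  exact connectedIn_configT (by omega) hPR (connectedIn_boxR (hx₁.trans hx₂) (hy₁.trans hy₂))

theorem punctured_configuration_connected
    (P : Set (ℤ × ℤ)) (hfin : P.Finite) (hne : P.Nonempty) (hconn : ConnectedIn P)
    (xmin xmax ymin ymax : ℤ)
    (hx1 : IsLeast (Prod.fst '' P) xmin) (hx2 : IsGreatest (Prod.fst '' P) xmax)
    (hy1 : IsLeast (Prod.snd '' P) ymin) (hy2 : IsGreatest (Prod.snd '' P) ymax)
    (c : ℤ) (hc : 2 ≤ c) :
    ConnectedIn (configT c P (boxR xmin xmax ymin ymax)) :=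
  punctured_configuration_connected_general P hne xmin xmax ymin ymax hx1 hx2 hy1 hy2 c hc
end

section
/- In an x-monotone connected polyomino P, the topmost cell of every nonempty column is a boundary cell, and P is simple (its complement in ℤ² is connected). -/
abbrev GRel (S : Set (ℤ × ℤ)) : ℤ × ℤ → ℤ × ℤ → Prop :=
  fun a b => a ∈ S ∧ b ∈ S ∧ Adj4 a b

lemma adj4_symm {p q : ℤ × ℤ} (h : Adj4 p q) : Adj4 q p := by
  unfold Adj4 at *
  rw [abs_sub_comm q.1, abs_sub_comm q.2]; exact h

lemma grel_symm (S : Set (ℤ × ℤ)) : Symmetric (GRel S) :=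
  fun _ _ h => ⟨h.2.1, h.1, adj4_symm h.2.2⟩

lemma adj_vert (x a : ℤ) : Adj4 (x, a) (x, a + 1) := by
  unfold Adj4
  have h1 : (x:ℤ) - x = 0 := by ring
  have h2 : a - (a + 1) = -1 := by ring
  simp only [h1, h2, abs_zero, zero_add]
  norm_num

lemma adj_horiz (a y : ℤ) : Adj4 (a, y) (a + 1, y) := by
  unfold Adj4
  have h1 : (y:ℤ) - y = 0 := by ring
  have h2 : a - (a + 1) = -1 := by ring
  simp only [h1, h2, abs_zero, add_zero]
  norm_num

lemma vert_up (S : Set (ℤ × ℤ)) (x a : ℤ) (n : ℕ)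
    (h : ∀ k : ℕ, k ≤ n → (x, a + (k : ℤ)) ∈ S) :
    Relation.ReflTransGen (GRel S) (x, a) (x, a + (n : ℤ)) := by
  induction n with
  | zero => simpa using Relation.ReflTransGen.refl
  | succ k ih =>
    have hk := ih (fun j hj => h j (Nat.le_succ_of_le hj))
    refine hk.tail ⟨h k (Nat.le_succ k), h (k + 1) le_rfl, ?_⟩
    have : (a + ((k + 1 : ℕ) : ℤ)) = (a + (k : ℤ)) + 1 := by push_cast; ring
    rw [this]
    exact adj_vert x (a + k)

lemma horiz_up (S : Set (ℤ × ℤ)) (y a : ℤ) (n : ℕ)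
    (h : ∀ k : ℕ, k ≤ n → ((a + (k : ℤ)), y) ∈ S) :
    Relation.ReflTransGen (GRel S) (a, y) (a + (n : ℤ), y) := by
  induction n with
  | zero => simpa using Relation.ReflTransGen.refl
  | succ k ih =>
    have hk := ih (fun j hj => h j (Nat.le_succ_of_le hj))
    refine hk.tail ⟨h k (Nat.le_succ k), h (k + 1) le_rfl, ?_⟩
    have : (a + ((k + 1 : ℕ) : ℤ)) = (a + (k : ℤ)) + 1 := by push_cast; ring
    rw [this]
    exact adj_horiz (a + k) y

lemma vert_any (S : Set (ℤ × ℤ)) (x y1 y2 : ℤ) (h : ∀ s, (x, s) ∈ S) :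
    Relation.ReflTransGen (GRel S) (x, y1) (x, y2) := by
  rcases le_total y1 y2 with hle | hle
  · have := vert_up S x y1 (y2 - y1).toNat (fun k _ => h _)
    have he : y1 + ((y2 - y1).toNat : ℤ) = y2 := by omega
    rwa [he] at this
  · have := vert_up S x y2 (y1 - y2).toNat (fun k _ => h _)
    have he : y2 + ((y1 - y2).toNat : ℤ) = y1 := by omega
    rw [he] at this
    exact ((@Relation.ReflTransGen.stdSymm _ _ ⟨fun _ _ h => grel_symm S h⟩).symm _ _) this

lemma horiz_any (S : Set (ℤ × ℤ)) (y x1 x2 : ℤ) (h : ∀ s, (s, y) ∈ S) :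
    Relation.ReflTransGen (GRel S) (x1, y) (x2, y) := by
  rcases le_total x1 x2 with hle | hle
  · have := horiz_up S y x1 (x2 - x1).toNat (fun k _ => h _)
    have he : x1 + ((x2 - x1).toNat : ℤ) = x2 := by omega
    rwa [he] at this
  · have := horiz_up S y x2 (x1 - x2).toNat (fun k _ => h _)
    have he : x2 + ((x1 - x2).toNat : ℤ) = x1 := by omega
    rw [he] at this
    exact ((@Relation.ReflTransGen.stdSymm _ _ ⟨fun _ _ h => grel_symm S h⟩).symm _ _) this
theorem xmonotone_topmost_boundary_and_simple
    (P : Set (ℤ × ℤ)) (hfin : P.Finite) (hne : P.Nonempty)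
    (hmono : XMonotone P) (hconn : ConnectedIn P) :
    (∀ x y : ℤ, (x, y) ∈ P → (∀ y', (x, y') ∈ P → y' ≤ y) → (x, y) ∈ Bdry P) ∧
    ConnectedIn Pᶜ := by
  obtain ⟨hCI, _⟩ := hmono
  constructor
  · intro x y hxy htop
    exact ⟨hxy, (x, y + 1), adj_vert x y, fun h => absurd (htop _ h) (by omega)⟩
  · obtain ⟨⟨u, v⟩, hub⟩ := hfin.bddAbove
    obtain ⟨⟨l, w⟩, hlb⟩ := hfin.bddBelow
    have hupx : ∀ p ∈ P, p.1 ≤ u := fun p hp => (hub hp).1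
    have hupy : ∀ p ∈ P, p.2 ≤ v := fun p hp => (hub hp).2
    have hlowy : ∀ p ∈ P, w ≤ p.2 := fun p hp => (hlb hp).2
    -- free regions
    have hrow_top : ∀ t : ℤ, v < t → ∀ s, (s, t) ∈ Pᶜ := by
      intro t ht s hs; exact absurd (hupy _ hs) (by omega)
    have hrow_bot : ∀ t : ℤ, t < w → ∀ s, (s, t) ∈ Pᶜ := by
      intro t ht s hs; exact absurd (hlowy _ hs) (by omega)
    have hcol_right : ∀ s, (u + 1, s) ∈ Pᶜ := by
      intro s hs; exact absurd (hupx _ hs) (by omega)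
    -- escape lemma: every free cell connects to T = (u+1, v+1)
    have escape : ∀ p ∈ Pᶜ,
        Relation.ReflTransGen (GRel Pᶜ) p (u + 1, v + 1) := by
      rintro ⟨x, y⟩ hp
      by_cases hcol : ∃ k : ℕ, (x, y + (k : ℤ)) ∈ P
      · -- something above (or at) (x,y): then everything below is free
        obtain ⟨k, hk⟩ := hcol
        have hbelow : ∀ j : ℕ, (x, y - (j : ℤ)) ∈ Pᶜ := by
          intro j hj
          exact hp (hCI x (y - j) (y + k) y hj hk (by omega) (by omega))
        -- go down to height t ≤ w - 1
        set n : ℕ := (y - (w - 1)).toNat with hn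
        set t : ℤ := y - (n : ℤ) with hts
        have htw : t ≤ w - 1 := by omega
        have hdn : Relation.ReflTransGen (GRel Pᶜ) (x, t) (x, y) := by
          have hmem : ∀ j : ℕ, j ≤ n → (x, t + (j : ℤ)) ∈ Pᶜ := by
            intro j hj
            have he : t + (j : ℤ) = y - ((n - j : ℕ) : ℤ) := by omega
            rw [he]; exact hbelow _
          have := vert_up Pᶜ x t n hmem
          have he : t + (n : ℤ) = y := by omega
          rwa [he] at this
        have h1 := ((@Relation.ReflTransGen.stdSymm _ _ ⟨fun _ _ h => grel_symm Pᶜ h⟩).symm _ _) hdn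
        have h2 : Relation.ReflTransGen (GRel Pᶜ) (x, t) (u + 1, t) :=
          horiz_any Pᶜ t x (u + 1) (hrow_bot t (by omega))
        have h3 : Relation.ReflTransGen (GRel Pᶜ) (u + 1, t) (u + 1, v + 1) :=
          vert_any Pᶜ (u + 1) t (v + 1) hcol_right
        exact (h1.trans h2).trans h3
      · -- everything above (x,y) is free
        push_neg at hcol
        set n : ℕ := (v + 1 - y).toNat with hn
        set t : ℤ := y + (n : ℤ) with hts
        have htv : v < t := by
          rcases le_or_gt y (v + 1) with h | h
          · omega
          · have : n = 0 := by omega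
            omega
        have hup : Relation.ReflTransGen (GRel Pᶜ) (x, y) (x, t) :=
          vert_up Pᶜ x y n (fun k _ => hcol k)
        have h2 : Relation.ReflTransGen (GRel Pᶜ) (x, t) (u + 1, t) :=
          horiz_any Pᶜ t x (u + 1) (hrow_top t htv)
        have h3 : Relation.ReflTransGen (GRel Pᶜ) (u + 1, t) (u + 1, v + 1) :=
          vert_any Pᶜ (u + 1) t (v + 1) hcol_right
        exact (hup.trans h2).trans h3
    refine ⟨⟨(u + 1, v + 1), hcol_right (v + 1)⟩, ?_⟩
    intro p hp q hq
    exact (escape p hp).trans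
      (((@Relation.ReflTransGen.stdSymm _ _ ⟨fun _ _ h => grel_symm Pᶜ h⟩).symm _ _) (escape q hq))
end
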